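/- Let σ > 0 and a ∈ (0, 1/2), with d1 = √(a/2), d2 = √((1−a)/2), c = Q(−(d2−d1)/σ) − Q(d1/σ) + Q((2d2−d1)/σ), and r = Q(−d1/σ) + Q(−(2d2+d1)/σ) − Q(−(d1+d2)/σ). Denote by SCP_{10}, SCP_{00}, SCP_{11}, SCP_{01} the integrals of φ_σ(x)·φ_σ(y) over (X1∪X2)×(Y1∪Y2), (Y1∪Y2)×(Y1∪Y2), (X1∪X2)×(X1∪X2), and (Y1∪Y2)×(X1∪X2), respectively, where X1 = [−(d2−d1), d1], X2 = (−∞, −(2d2−d1)], Y1 = [−d1, ∞), Y2 = [−(2d2+d1), −(d1+d2)]. Then the symbol error probability when the inner symbol is '00', SEP^{00} = 1 − (SCP_{10} + SCP_{00} + SCP_{11} + SCP_{01})/4, satisfies SEP^{00} = 1 − ((c + r)/2)². -/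
import Mathlib


open MeasureTheory Real

/-- The Gaussian Q-function: `Q(x) = (1/√(2π)) ∫_x^∞ exp(-u²/2) du`. -/
noncomputable def gaussQ (x : ℝ) : ℝ :=
  (Real.sqrt (2 * Real.pi))⁻¹ * ∫ u in Set.Ioi x, Real.exp (-(u ^ 2) / 2)

/-- The Gaussian density with standard deviation `σ`. -/
noncomputable def gaussPdf (σ x : ℝ) : ℝ :=
  (σ * Real.sqrt (2 * Real.pi))⁻¹ * Real.exp (-(x ^ 2) / (2 * σ ^ 2))

lemma gaussPdf_integrable {σ : ℝ} (hσ : 0 < σ) : Integrable (gaussPdf σ) := by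
  have h : gaussPdf σ
      = fun x => (σ * Real.sqrt (2 * Real.pi))⁻¹ * Real.exp (-(1 / (2 * σ ^ 2)) * x ^ 2) := by
    funext x
    unfold gaussPdf
    congr 1
    ring_nf
  rw [h]
  exact (integrable_exp_neg_mul_sq (by positivity)).const_mul _

lemma gaussPdf_int_Ioi {σ : ℝ} (hσ : 0 < σ) (t : ℝ) :
    ∫ x in Set.Ioi t, gaussPdf σ x = gaussQ (t / σ) := by
  have h : ∀ x : ℝ, gaussPdf σ x
      = σ⁻¹ * ((Real.sqrt (2 * Real.pi))⁻¹ * Real.exp (-((σ⁻¹ * x) ^ 2) / 2)) := by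
    intro x
    unfold gaussPdf
    rw [mul_inv, mul_assoc]
    congr 2
    rw [mul_pow]
    field_simp
  simp_rw [h]
  rw [integral_const_mul,
    integral_comp_mul_left_Ioi
      (fun u => (Real.sqrt (2 * Real.pi))⁻¹ * Real.exp (-(u ^ 2) / 2)) t (inv_pos.mpr hσ),
    inv_inv, smul_eq_mul, ← mul_assoc, inv_mul_cancel₀ hσ.ne', one_mul,
    integral_const_mul, gaussQ]
  congr 2
  rw [div_eq_inv_mul]

lemma gaussPdf_int_Ici {σ : ℝ} (hσ : 0 < σ) (t : ℝ) :
    ∫ x in Set.Ici t, gaussPdf σ x = gaussQ (t / σ) := by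
  rw [integral_Ici_eq_integral_Ioi, gaussPdf_int_Ioi hσ]

lemma gaussPdf_int_Iic {σ : ℝ} (hσ : 0 < σ) (t : ℝ) :
    ∫ x in Set.Iic t, gaussPdf σ x = gaussQ (-t / σ) := by
  have h : ∀ x : ℝ, gaussPdf σ x = gaussPdf σ (-x) := by
    intro x; unfold gaussPdf; rw [neg_pow]; ring_nf
  calc ∫ x in Set.Iic t, gaussPdf σ x = ∫ x in Set.Iic t, gaussPdf σ (-x) := by simp_rw [← h]
    _ = ∫ x in Set.Ioi (-t), gaussPdf σ x := integral_comp_neg_Iic t _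
    _ = gaussQ (-t / σ) := gaussPdf_int_Ioi hσ _

lemma gaussPdf_int_Icc {σ : ℝ} (hσ : 0 < σ) {s t : ℝ} (hst : s ≤ t) :
    ∫ x in Set.Icc s t, gaussPdf σ x = gaussQ (s / σ) - gaussQ (t / σ) := by
  have hint := gaussPdf_integrable hσ
  have key : (∫ x in Set.Ioc s t, gaussPdf σ x) + ∫ x in Set.Ioi t, gaussPdf σ x
      = ∫ x in Set.Ioi s, gaussPdf σ x := by
    rw [← setIntegral_union (Set.Ioc_disjoint_Ioi le_rfl) measurableSet_Ioi
      hint.integrableOn hint.integrableOn, Set.Ioc_union_Ioi_eq_Ioi hst]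
  rw [integral_Icc_eq_integral_Ioc]
  rw [gaussPdf_int_Ioi hσ, gaussPdf_int_Ioi hσ] at key
  linarith

theorem stmt_13 (σ a d1 d2 c r SCP10 SCP00 SCP11 SCP01 SEP00 : ℝ)
    (hσ : 0 < σ) (ha : a ∈ Set.Ioo (0 : ℝ) (1 / 2))
    (hd1 : d1 = Real.sqrt (a / 2)) (hd2 : d2 = Real.sqrt ((1 - a) / 2))
    (X1 X2 Y1 Y2 : Set ℝ)
    (hX1 : X1 = Set.Icc (-(d2 - d1)) d1) (hX2 : X2 = Set.Iic (-(2 * d2 - d1)))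
    (hY1 : Y1 = Set.Ici (-d1)) (hY2 : Y2 = Set.Icc (-(2 * d2 + d1)) (-(d1 + d2)))
    (hc : c = gaussQ (-(d2 - d1) / σ) - gaussQ (d1 / σ) + gaussQ ((2 * d2 - d1) / σ))
    (hr : r = gaussQ (-d1 / σ) + gaussQ (-(2 * d2 + d1) / σ) - gaussQ (-(d1 + d2) / σ))
    (hS10 : SCP10 = ∫ p in (X1 ∪ X2) ×ˢ (Y1 ∪ Y2), gaussPdf σ p.1 * gaussPdf σ p.2)
    (hS00 : SCP00 = ∫ p in (Y1 ∪ Y2) ×ˢ (Y1 ∪ Y2), gaussPdf σ p.1 * gaussPdf σ p.2)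
    (hS11 : SCP11 = ∫ p in (X1 ∪ X2) ×ˢ (X1 ∪ X2), gaussPdf σ p.1 * gaussPdf σ p.2)
    (hS01 : SCP01 = ∫ p in (Y1 ∪ Y2) ×ˢ (X1 ∪ X2), gaussPdf σ p.1 * gaussPdf σ p.2)
    (hSEP : SEP00 = 1 - (SCP10 + SCP00 + SCP11 + SCP01) / 4) :
    SEP00 = 1 - ((c + r) / 2) ^ 2 := by
  obtain ⟨ha0, ha2⟩ := ha
  have hint := gaussPdf_integrable hσ
  have hd1pos : 0 < d1 := by rw [hd1]; positivity
  have hd12 : d1 < d2 := by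
    rw [hd1, hd2]
    exact Real.sqrt_lt_sqrt (by positivity) (by linarith)
  have hd2pos : 0 < d2 := lt_trans hd1pos hd12
  -- the X-integral equals c
  have hIX : ∫ x in X1 ∪ X2, gaussPdf σ x = c := by
    have hdisj : Disjoint X1 X2 := by
      rw [hX1, hX2, Set.disjoint_left]
      intro x hx hx'
      simp only [Set.mem_Icc, Set.mem_Iic] at hx hx'
      linarith [hx.1]
    rw [setIntegral_union hdisj (hX2 ▸ measurableSet_Iic)
        hint.integrableOn hint.integrableOn,
      hX1, hX2, gaussPdf_int_Icc hσ (by linarith), gaussPdf_int_Iic hσ, neg_neg, hc]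
  -- the Y-integral equals r
  have hIY : ∫ x in Y1 ∪ Y2, gaussPdf σ x = r := by
    have hdisj : Disjoint Y1 Y2 := by
      rw [hY1, hY2, Set.disjoint_left]
      intro x hx hx'
      simp only [Set.mem_Icc, Set.mem_Ici] at hx hx'
      linarith [hx'.2]
    rw [setIntegral_union hdisj (hY2 ▸ measurableSet_Icc)
        hint.integrableOn hint.integrableOn,
      hY1, hY2, gaussPdf_int_Ici hσ, gaussPdf_int_Icc hσ (by linarith), hr]
    ring
  have hprod : ∀ s t : Set ℝ,
      (∫ p in s ×ˢ t, gaussPdf σ p.1 * gaussPdf σ p.2)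
        = (∫ x in s, gaussPdf σ x) * ∫ x in t, gaussPdf σ x := by
    intro s t
    rw [Measure.volume_eq_prod, setIntegral_prod_mul]
  rw [hSEP, hS10, hS00, hS11, hS01, hprod, hprod, hprod, hprod, hIX, hIY]
  ring
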